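/- Let μ ≥ 0 and let N be a Poisson random variable with mean μ. Then for any δ ∈ (0,1), the probability that μ > U₊(N,δ) is at most δ, where U₊(N,δ) := 2·log(1/δ) + N + √(2·N·log(1/δ)). -/

import Mathlib

open MeasureTheory ProbabilityTheory Real
open scoped NNReal ENNReal

/-- Upper confidence bound: `U₊(N,δ) = 2·log(1/δ) + N + √(2·N·log(1/δ))`. -/
noncomputable def Uplus (N δ : ℝ) : ℝ :=
  2 * Real.log (1 / δ) + N + Real.sqrt (2 * N * Real.log (1 / δ))

/-!
The event `μ > U₊(N, δ)` is `{N ≤ K}` for the largest `K` in it. The Chernoff bound for the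
lower Poisson tail, with the tilt `(K/μ)^N`, gives `P[N ≤ K] ≤ (μ/K)^K e^{K-μ}`, and
`log t ≤ sinh (log t) = (t - t⁻¹)/2` turns this into `exp (-(μ - K)² / (2μ))`. Finally
`μ > U₊(K, δ)` is exactly the condition that puts `(μ - K)² / (2μ)` above `log (1/δ)`.
-/

open Finset
open scoped Nat

theorem Real.log_le_sub_inv_div_two {t : ℝ} (ht : 1 ≤ t) : log t ≤ (t - t⁻¹) / 2 := by
  rw [← sinh_log (by linarith)]
  exact self_le_sinh_iff.mpr (log_nonneg ht)

theorem pow_mul_pow_le_pow_mul_pow {R : Type*} [CommSemiring R] [PartialOrder R]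
    [IsOrderedRing R] {a b : R} (ha : 0 ≤ a) (hab : a ≤ b) {n k : ℕ} (hnk : n ≤ k) :
    b ^ n * a ^ k ≤ a ^ n * b ^ k := by
  obtain ⟨d, rfl⟩ := Nat.exists_eq_add_of_le hnk
  have hb : 0 ≤ b := ha.trans hab
  rw [pow_add, pow_add, mul_left_comm]
  gcongr

theorem natCast_pow_self_mul_sum_poisson_le {m : ℝ} {K : ℕ} (hK : (K : ℝ) ≤ m) :
    (K : ℝ) ^ K * ∑ n ∈ range (K + 1), exp (-m) * m ^ n / n ! ≤ m ^ K * exp (K - m) := by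
  have hK0 : (0 : ℝ) ≤ K := K.cast_nonneg
  calc (K : ℝ) ^ K * ∑ n ∈ range (K + 1), exp (-m) * m ^ n / n !
      = exp (-m) * ∑ n ∈ range (K + 1), m ^ n * (K : ℝ) ^ K / n ! := by
        rw [mul_sum, mul_sum]; congr! 1 with n; ring
    _ ≤ exp (-m) * ∑ n ∈ range (K + 1), m ^ K * ((K : ℝ) ^ n / n !) := by
        gcongr with n hn
        rw [← mul_div_assoc, mul_comm (m ^ K)]
        exact div_le_div_of_nonneg_right
          (pow_mul_pow_le_pow_mul_pow hK0 hK (Nat.lt_succ_iff.mp (mem_range.mp hn))) (by positivity)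
    _ ≤ exp (-m) * (m ^ K * exp K) := by
        rw [← mul_sum]
        have hexp := sum_le_exp_of_nonneg hK0 (K + 1)
        have hmK : 0 ≤ m ^ K := pow_nonneg (hK0.trans hK) K
        gcongr
    _ = m ^ K * exp (K - m) := by rw [sub_eq_add_neg, exp_add]; ring

theorem div_natCast_pow_self_mul_exp_le {m : ℝ} {K : ℕ} (hK : (K : ℝ) ≤ m) :
    (m / K) ^ K * exp (K - m) ≤ exp (-((m - K) ^ 2 / (2 * m))) := by
  rcases Nat.eq_zero_or_pos K with rfl | hKpos
  · rcases hK.eq_or_lt with hm | hm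
    · -- at `m = 0` the right side is `exp 0`, since `0 / 0 = 0`
      simp [← hm]
    · simp only [Nat.cast_zero, pow_zero, one_mul, zero_sub, sub_zero]
      gcongr
      rw [div_le_iff₀ (by positivity)]
      nlinarith
  have hK0 : (0 : ℝ) < K := Nat.cast_pos.mpr hKpos
  have hm : 0 < m := hK0.trans_le hK
  have hlog : K * log (m / K) ≤ (m ^ 2 - K ^ 2) / (2 * m) := by
    calc K * log (m / K) ≤ K * ((m / K - (m / K)⁻¹) / 2) := by
          gcongr; exact log_le_sub_inv_div_two ((one_le_div hK0).mpr hK)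
      _ = (m ^ 2 - K ^ 2) / (2 * m) := by field_simp
  calc (m / K) ^ K * exp (K - m) = exp (K * log (m / K) + (K - m)) := by
        rw [exp_add, ← rpow_natCast, rpow_def_of_pos (by positivity), mul_comm (K : ℝ)]
    _ ≤ exp ((m ^ 2 - K ^ 2) / (2 * m) + (K - m)) := by gcongr
    _ = exp (-((m - K) ^ 2 / (2 * m))) := by congr 1; field_simp; ring

theorem sum_poisson_le_exp {m : ℝ} {K : ℕ} (hK : (K : ℝ) ≤ m) :
    ∑ n ∈ range (K + 1), exp (-m) * m ^ n / n ! ≤ exp (-((m - K) ^ 2 / (2 * m))) := by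
  have hpos : (0 : ℝ) < (K : ℝ) ^ K := by exact_mod_cast Nat.pow_self_pos
  refine le_trans ?_ (div_natCast_pow_self_mul_exp_le hK)
  rw [div_pow, div_mul_eq_mul_div, le_div_iff₀ hpos, mul_comm]
  exact natCast_pow_self_mul_sum_poisson_le hK

theorem poissonMeasure_finset (r : ℝ≥0) (s : Finset ℕ) :
    poissonMeasure r s = ENNReal.ofReal (∑ n ∈ s, exp (-r) * r ^ n / n !) := by
  rw [← sum_measure_singleton, ENNReal.ofReal_sum_of_nonneg (fun n _ => by positivity)]
  simp only [poissonMeasure_singleton]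

theorem poissonMeasure_Iic_le (r : ℝ≥0) {K : ℕ} (hK : (K : ℝ) ≤ r) :
    poissonMeasure r (Set.Iic K) ≤ ENNReal.ofReal (exp (-((r - K) ^ 2 / (2 * r)))) := by
  rw [← coe_Iic, ← Nat.range_succ_eq_Iic, poissonMeasure_finset]
  exact ENNReal.ofReal_le_ofReal (sum_poisson_le_exp hK)

theorem le_sq_sub_div_of_add_sqrt_lt {L k m : ℝ} (hL : 0 ≤ L) (hk : 0 ≤ k)
    (h : 2 * L + k + √(2 * k * L) < m) : L ≤ (m - k) ^ 2 / (2 * m) := by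
  have hs := sqrt_nonneg (2 * k * L)
  have hs2 : √(2 * k * L) ^ 2 = 2 * k * L := sq_sqrt (by positivity)
  rw [le_div_iff₀ (by linarith)]
  nlinarith [mul_le_mul_of_nonneg_right h.le hs]

theorem poisson_upper_confidence (μ : ℝ≥0) (δ : ℝ) (hδ : δ ∈ Set.Ioo (0 : ℝ) 1) :
    poissonMeasure μ {n : ℕ | (μ : ℝ) > Uplus (n : ℝ) δ} ≤ ENNReal.ofReal δ := by
  set S := {n : ℕ | (μ : ℝ) > Uplus (n : ℝ) δ}
  have hL : 0 ≤ log (1 / δ) := log_nonneg (one_le_one_div hδ.1 hδ.2.le)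
  have le_Uplus (n : ℕ) : (n : ℝ) ≤ Uplus n δ := by
    have := sqrt_nonneg (2 * n * log (1 / δ))
    unfold Uplus; linarith
  rcases S.eq_empty_or_nonempty with hS | hS
  · simp [hS]
  have hbdd : BddAbove S :=
    ⟨⌈(μ : ℝ)⌉₊, fun n hn => (Nat.lt_ceil.mpr ((le_Uplus n).trans_lt hn)).le⟩
  set K := sSup S
  have hK : Uplus K δ < μ := Nat.sSup_mem hS hbdd
  calc poissonMeasure μ S ≤ poissonMeasure μ (Set.Iic K) :=
        measure_mono fun n hn => le_csSup hbdd hn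
    _ ≤ ENNReal.ofReal (exp (-((μ - K) ^ 2 / (2 * μ)))) :=
        poissonMeasure_Iic_le μ ((le_Uplus _).trans hK.le)
    _ ≤ ENNReal.ofReal (exp (-log (1 / δ))) := by
        gcongr
        exact le_sq_sub_div_of_add_sqrt_lt hL (Nat.cast_nonneg _) hK
    _ = ENNReal.ofReal δ := by rw [one_div, log_inv, neg_neg, exp_log hδ.1]
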